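/- Let r > 0. For continuously differentiable functions F, G : ℝ³ → ℝ, with coordinates of a point p ∈ ℝ³ written (p_h, p_e, p_f) and ∂_h, ∂_e, ∂_f denoting the three partial derivatives, define the bracket {F, G}_r(p) = 2·p_e·(∂_h F·∂_e G − ∂_e F·∂_h G)(p) − 2·p_f·(∂_h F·∂_f G − ∂_f F·∂_h G)(p) + ((e^{r·p_h} − e^{−r·p_h})/(2r))·(∂_e F·∂_f G − ∂_f F·∂_e G)(p). Then for all infinitely differentiable F, G, H : ℝ³ → ℝ the Jacobi identity holds: {F, {G, H}_r}_r + {G, {H, F}_r}_r + {H, {F, G}_r}_r = 0. -/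

import Mathlib

/-- Partial derivative of `F : ℝ³ → ℝ` in the `i`-th coordinate direction. -/
noncomputable def pd (i : Fin 3) (F : (Fin 3 → ℝ) → ℝ) (p : Fin 3 → ℝ) : ℝ :=
  fderiv ℝ F p (Pi.single i 1)

/-- The `r`-deformed Poisson bracket on `ℝ³ ≈ su₂*` (coordinates
`(p_h, p_e, p_f) = (p 0, p 1, p 2)`), determined by `{H, E}_r = 2E`,
`{H, F}_r = -2F`, `{E, F}_r = (e^{rH} - e^{-rH})/(2r)`. -/
noncomputable def rBracket (r : ℝ) (F G : (Fin 3 → ℝ) → ℝ) (p : Fin 3 → ℝ) : ℝ :=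
  2 * p 1 * (pd 0 F p * pd 1 G p - pd 1 F p * pd 0 G p)
    - 2 * p 2 * (pd 0 F p * pd 2 G p - pd 2 F p * pd 0 G p)
    + (Real.exp (r * p 0) - Real.exp (-(r * p 0))) / (2 * r) *
        (pd 1 F p * pd 2 G p - pd 2 F p * pd 1 G p)

noncomputable def D2 (F : (Fin 3 → ℝ) → ℝ) (p : Fin 3 → ℝ) (i j : Fin 3) : ℝ :=
  fderiv ℝ (fderiv ℝ F) p (Pi.single i 1) (Pi.single j 1)

lemma contDiff_pd {F : (Fin 3 → ℝ) → ℝ} (hF : ContDiff ℝ (⊤ : ℕ∞) F) (j : Fin 3) :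
    ContDiff ℝ (⊤ : ℕ∞) (pd j F) :=
  (hF.fderiv_right (by simp)).clm_apply contDiff_const

lemma diffAt_pd {F : (Fin 3 → ℝ) → ℝ} (hF : ContDiff ℝ (⊤ : ℕ∞) F) (j : Fin 3) (p : Fin 3 → ℝ) :
    DifferentiableAt ℝ (pd j F) p :=
  ((contDiff_pd hF j).differentiable (by simp)).differentiableAt

lemma fderiv_pd {F : (Fin 3 → ℝ) → ℝ} (hF : ContDiff ℝ (⊤ : ℕ∞) F) (i j : Fin 3) (p : Fin 3 → ℝ) :
    fderiv ℝ (pd j F) p (Pi.single i 1) = D2 F p i j := by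
  have hd : DifferentiableAt ℝ (fderiv ℝ F) p :=
    ((hF.fderiv_right (by simp) : ContDiff ℝ (⊤ : ℕ∞) (fderiv ℝ F)).differentiable (by simp)).differentiableAt
  have e : pd j F = fun q => fderiv ℝ F q (Pi.single j 1) := rfl
  simp only [D2, e, fderiv_clm_apply hd (differentiableAt_const _)]
  simp [ContinuousLinearMap.flip_apply]

lemma D2_symm {F : (Fin 3 → ℝ) → ℝ} (hF : ContDiff ℝ (⊤ : ℕ∞) F) (i j : Fin 3) (p : Fin 3 → ℝ) :
    D2 F p i j = D2 F p j i :=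
  (hF.contDiffAt.isSymmSndFDerivAt (by rw [minSmoothness_of_isRCLikeNormedField]; exact WithTop.coe_le_coe.mpr le_top)) _ _

lemma pd_rBracket (r : ℝ) {G H : (Fin 3 → ℝ) → ℝ}
    (hG : ContDiff ℝ (⊤ : ℕ∞) G) (hH : ContDiff ℝ (⊤ : ℕ∞) H) (i : Fin 3) (p : Fin 3 → ℝ) :
    pd i (rBracket r G H) p =
      2 * Pi.single (M := fun _ => ℝ) i 1 1 *
          (pd 0 G p * pd 1 H p - pd 1 G p * pd 0 H p)
        + 2 * p 1 * (D2 G p i 0 * pd 1 H p + pd 0 G p * D2 H p i 1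
            - (D2 G p i 1 * pd 0 H p + pd 1 G p * D2 H p i 0))
        - (2 * Pi.single (M := fun _ => ℝ) i 1 2 *
            (pd 0 G p * pd 2 H p - pd 2 G p * pd 0 H p)
          + 2 * p 2 * (D2 G p i 0 * pd 2 H p + pd 0 G p * D2 H p i 2
              - (D2 G p i 2 * pd 0 H p + pd 2 G p * D2 H p i 0)))
        + Pi.single (M := fun _ => ℝ) i 1 0 *
            ((Real.exp (r * p 0) * r + Real.exp (-(r * p 0)) * r) / (2 * r)) *
            (pd 1 G p * pd 2 H p - pd 2 G p * pd 1 H p)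
        + (Real.exp (r * p 0) - Real.exp (-(r * p 0))) / (2 * r) *
            (D2 G p i 1 * pd 2 H p + pd 1 G p * D2 H p i 2
              - (D2 G p i 2 * pd 1 H p + pd 2 G p * D2 H p i 1)) := by
  have dG : ∀ j, HasFDerivAt (pd j G) (fderiv ℝ (pd j G) p) p := fun j =>
    (diffAt_pd hG j p).hasFDerivAt
  have dH : ∀ j, HasFDerivAt (pd j H) (fderiv ℝ (pd j H) p) p := fun j =>
    (diffAt_pd hH j p).hasFDerivAt
  have hproj : ∀ j : Fin 3, HasFDerivAt (fun q : Fin 3 → ℝ => q j)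
      ((ContinuousLinearMap.proj j : (Fin 3 → ℝ) →L[ℝ] ℝ)) p := fun j => by exact hasFDerivAt_apply j p
  have hc1 : HasFDerivAt (fun q : Fin 3 → ℝ => 2 * q 1)
      ((2 : ℝ) • (ContinuousLinearMap.proj 1 : (Fin 3 → ℝ) →L[ℝ] ℝ)) p := (hproj 1).const_mul 2
  have hc2 : HasFDerivAt (fun q : Fin 3 → ℝ => 2 * q 2)
      ((2 : ℝ) • (ContinuousLinearMap.proj 2 : (Fin 3 → ℝ) →L[ℝ] ℝ)) p := (hproj 2).const_mul 2
  -- derivative of the coefficient (e^{r h} - e^{-r h})/(2r) as a function of q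
  have hg : HasDerivAt (fun t : ℝ => (Real.exp (r * t) - Real.exp (-(r * t))) / (2 * r))
      ((Real.exp (r * p 0) * (r * 1) - Real.exp (-(r * p 0)) * -(r * 1)) / (2 * r)) (p 0) := by
    have h1 : HasDerivAt (fun t : ℝ => Real.exp (r * t)) (Real.exp (r * p 0) * (r * 1)) (p 0) :=
      ((hasDerivAt_id (p 0)).const_mul r).exp
    have h2 : HasDerivAt (fun t : ℝ => Real.exp (-(r * t)))
        (Real.exp (-(r * p 0)) * -(r * 1)) (p 0) :=
      ((hasDerivAt_id (p 0)).const_mul r).neg.exp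
    exact (h1.sub h2).div_const (2 * r)
  have hs : HasFDerivAt
      (fun q : Fin 3 → ℝ => (Real.exp (r * q 0) - Real.exp (-(r * q 0))) / (2 * r))
      (((Real.exp (r * p 0) * (r * 1) - Real.exp (-(r * p 0)) * -(r * 1)) / (2 * r)) •
        (ContinuousLinearMap.proj 0 : (Fin 3 → ℝ) →L[ℝ] ℝ)) p :=
    by have := hg.comp_hasFDerivAt p (hproj 0); exact this
  have hA : HasFDerivAt (fun q => pd 0 G q * pd 1 H q - pd 1 G q * pd 0 H q)
      _ p := ((dG 0).mul (dH 1)).sub ((dG 1).mul (dH 0))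
  have hB : HasFDerivAt (fun q => pd 0 G q * pd 2 H q - pd 2 G q * pd 0 H q)
      _ p := ((dG 0).mul (dH 2)).sub ((dG 2).mul (dH 0))
  have hC : HasFDerivAt (fun q => pd 1 G q * pd 2 H q - pd 2 G q * pd 1 H q)
      _ p := ((dG 1).mul (dH 2)).sub ((dG 2).mul (dH 1))
  have htot : HasFDerivAt (fun q =>
      2 * q 1 * (pd 0 G q * pd 1 H q - pd 1 G q * pd 0 H q)
        - 2 * q 2 * (pd 0 G q * pd 2 H q - pd 2 G q * pd 0 H q)
        + (Real.exp (r * q 0) - Real.exp (-(r * q 0))) / (2 * r) *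
            (pd 1 G q * pd 2 H q - pd 2 G q * pd 1 H q)) _ p :=
    ((hc1.mul hA).sub (hc2.mul hB)).add (hs.mul hC)
  have e : rBracket r G H = fun q =>
      2 * q 1 * (pd 0 G q * pd 1 H q - pd 1 G q * pd 0 H q)
        - 2 * q 2 * (pd 0 G q * pd 2 H q - pd 2 G q * pd 0 H q)
        + (Real.exp (r * q 0) - Real.exp (-(r * q 0))) / (2 * r) *
            (pd 1 G q * pd 2 H q - pd 2 G q * pd 1 H q) := rfl
  rw [pd, e, htot.fderiv]
  simp only [ContinuousLinearMap.add_apply, ContinuousLinearMap.sub_apply,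
    ContinuousLinearMap.smul_apply, ContinuousLinearMap.coe_smul', Pi.smul_apply,
    ContinuousLinearMap.proj_apply, smul_eq_mul, fderiv_pd hG, fderiv_pd hH]
  ring

set_option maxHeartbeats 4000000 in
/-- Lemma 3.2: the `r`-deformed bracket `{·,·}_r` satisfies the Jacobi
identity, hence is a legitimate Poisson bracket. -/
theorem rBracket_jacobi (r : ℝ) (hr : 0 < r)
    (F G H : (Fin 3 → ℝ) → ℝ)
    (hF : ContDiff ℝ (⊤ : ℕ∞) F) (hG : ContDiff ℝ (⊤ : ℕ∞) G) (hH : ContDiff ℝ (⊤ : ℕ∞) H) :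
    ∀ p : Fin 3 → ℝ,
      rBracket r F (rBracket r G H) p + rBracket r G (rBracket r H F) p +
        rBracket r H (rBracket r F G) p = 0 := by
  intro p
  rw [show rBracket r F (rBracket r G H) p =
        2 * p 1 * (pd 0 F p * pd 1 (rBracket r G H) p - pd 1 F p * pd 0 (rBracket r G H) p)
          - 2 * p 2 * (pd 0 F p * pd 2 (rBracket r G H) p - pd 2 F p * pd 0 (rBracket r G H) p)
          + (Real.exp (r * p 0) - Real.exp (-(r * p 0))) / (2 * r) *
              (pd 1 F p * pd 2 (rBracket r G H) p - pd 2 F p * pd 1 (rBracket r G H) p) from rfl,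
      show rBracket r G (rBracket r H F) p =
        2 * p 1 * (pd 0 G p * pd 1 (rBracket r H F) p - pd 1 G p * pd 0 (rBracket r H F) p)
          - 2 * p 2 * (pd 0 G p * pd 2 (rBracket r H F) p - pd 2 G p * pd 0 (rBracket r H F) p)
          + (Real.exp (r * p 0) - Real.exp (-(r * p 0))) / (2 * r) *
              (pd 1 G p * pd 2 (rBracket r H F) p - pd 2 G p * pd 1 (rBracket r H F) p) from rfl,
      show rBracket r H (rBracket r F G) p =
        2 * p 1 * (pd 0 H p * pd 1 (rBracket r F G) p - pd 1 H p * pd 0 (rBracket r F G) p)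
          - 2 * p 2 * (pd 0 H p * pd 2 (rBracket r F G) p - pd 2 H p * pd 0 (rBracket r F G) p)
          + (Real.exp (r * p 0) - Real.exp (-(r * p 0))) / (2 * r) *
              (pd 1 H p * pd 2 (rBracket r F G) p - pd 2 H p * pd 1 (rBracket r F G) p) from rfl]
  rw [pd_rBracket r hG hH 0 p, pd_rBracket r hG hH 1 p, pd_rBracket r hG hH 2 p,
      pd_rBracket r hH hF 0 p, pd_rBracket r hH hF 1 p, pd_rBracket r hH hF 2 p,
      pd_rBracket r hF hG 0 p, pd_rBracket r hF hG 1 p, pd_rBracket r hF hG 2 p]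
  rw [D2_symm hF 1 0 p, D2_symm hF 2 0 p, D2_symm hF 2 1 p,
      D2_symm hG 1 0 p, D2_symm hG 2 0 p, D2_symm hG 2 1 p,
      D2_symm hH 1 0 p, D2_symm hH 2 0 p, D2_symm hH 2 1 p]
  simp only [Pi.single_apply, Fin.reduceEq, reduceIte, if_true, if_false]
  ring
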